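/- arXiv:2504.15671 — 5 statements merged into one kernel-verified Lean document; each statement's English description precedes it below -/
import Mathlib

section
/- (Theorem 1, functional gap bound.) If x* minimizes f_ν over M, x̂* minimizes f̂_ν over M, and f̂_ν(x̂*) > 0, then the relative error satisfies (f_ν(x̂*) − f_ν(x*)) / f_ν(x*) ≤ (F̂_ν(x̂*) − f̂_ν(x̂*)) / f̂_ν(x̂*). -/
open Finset

lemma sum_rpow_mono {N : ℕ} {ν : ℝ} (hν : 1 ≤ ν) (g h : Fin N → ℝ)
    (hg : ∀ i, 0 ≤ g i) (hgh : ∀ i, g i ≤ h i) :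
    (∑ i, g i ^ ν) ^ (1 / ν) ≤ (∑ i, h i ^ ν) ^ (1 / ν) := by
  apply Real.rpow_le_rpow
  · exact Finset.sum_nonneg fun i _ => Real.rpow_nonneg (hg i) ν
  · exact Finset.sum_le_sum fun i _ => Real.rpow_le_rpow (hg i) (hgh i) (by linarith)
  · positivity

theorem functional_gap_relative {M : Type*} [MetricSpace M] {N : ℕ} (hN : 1 ≤ N)
    (x : Fin N → M) {ν : ℝ} (hν : 1 ≤ ν)
    (mhat Mhat : M → M → ℝ)
    (hbounds : ∀ a b : M, 0 ≤ mhat a b ∧ mhat a b ≤ dist a b ∧ dist a b ≤ Mhat a b)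
    (f fhat Fhat : M → ℝ)
    (hf : ∀ y : M, f y = (∑ i, dist y (x i) ^ ν) ^ (1 / ν))
    (hfhat : ∀ y : M, fhat y = (∑ i, mhat y (x i) ^ ν) ^ (1 / ν))
    (hFhat : ∀ y : M, Fhat y = (∑ i, Mhat y (x i) ^ ν) ^ (1 / ν))
    (xstar xhat : M)
    (hxstar : ∀ z : M, f xstar ≤ f z)
    (hxhat : ∀ z : M, fhat xhat ≤ fhat z)
    (hpos : 0 < fhat xhat) :
    (f xhat - f xstar) / f xstar ≤ (Fhat xhat - fhat xhat) / fhat xhat := by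
  have h1 : fhat xstar ≤ f xstar := by
    rw [hfhat, hf]
    exact sum_rpow_mono hν _ _ (fun i => (hbounds xstar (x i)).1)
      (fun i => (hbounds xstar (x i)).2.1)
  have h2 : f xhat ≤ Fhat xhat := by
    rw [hf, hFhat]
    exact sum_rpow_mono hν _ _ (fun i => dist_nonneg)
      (fun i => (hbounds xhat (x i)).2.2)
  have h3 : fhat xhat ≤ f xstar := le_trans (hxhat xstar) h1
  have hfs : 0 < f xstar := lt_of_lt_of_le hpos h3
  have h4 : 0 ≤ Fhat xhat := le_trans (le_trans hpos.le h3) (le_trans (hxstar xhat) h2)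
  rw [sub_div, sub_div, div_self hfs.ne', div_self hpos.ne']
  exact sub_le_sub_right (div_le_div₀ h4 h2 hpos h3) 1
end

section
/- (Theorem 2, first inequality.) If x* minimizes f_ν over M, then for every x ∈ M one has d(x*, x) ≤ N^{−1/ν} · 2 f_ν(x). -/
open Finset

-- Minkowski's inequality in `ℓ^p(s)` applied to `i ↦ dist a (x i) + dist b (x i)`, which
-- dominates the constant vector `dist a b` by the triangle inequality.
theorem card_rpow_mul_dist_le_Lp_add {M ι : Type*} [PseudoMetricSpace M] (s : Finset ι)
    (x : ι → M) {p : ℝ} (hp : 1 ≤ p) (a b : M) :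
    (#s : ℝ) ^ (1 / p) * dist a b ≤
      (∑ i ∈ s, dist a (x i) ^ p) ^ (1 / p) + (∑ i ∈ s, dist b (x i) ^ p) ^ (1 / p) := by
  have hp₀ : 0 < p := one_pos.trans_le hp
  calc (#s : ℝ) ^ (1 / p) * dist a b
      = (∑ _i ∈ s, dist a b ^ p) ^ (1 / p) := by
        rw [sum_const, nsmul_eq_mul, Real.mul_rpow (by positivity) (by positivity),
          ← Real.rpow_mul dist_nonneg, mul_one_div_cancel hp₀.ne', Real.rpow_one]
    _ ≤ (∑ i ∈ s, (dist a (x i) + dist b (x i)) ^ p) ^ (1 / p) := by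
      gcongr with i
      exact dist_triangle_right _ _ _
    _ ≤ _ := Real.Lp_add_le_of_nonneg s hp (fun _ _ => dist_nonneg) (fun _ _ => dist_nonneg)

theorem dist_to_barycenter_upper {M : Type*} [MetricSpace M] {N : ℕ} (hN : 1 ≤ N)
    (x : Fin N → M) {ν : ℝ} (hν : 1 ≤ ν)
    (f : M → ℝ)
    (hf : ∀ y : M, f y = (∑ i, dist y (x i) ^ ν) ^ (1 / ν))
    (xstar : M) (hxstar : ∀ z : M, f xstar ≤ f z)
    (y : M) :
    dist xstar y ≤ (N : ℝ) ^ (-(1 / ν)) * (2 * f y) := by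
  have hN₀ : (0 : ℝ) < N := by exact_mod_cast hN
  have key : (N : ℝ) ^ (1 / ν) * dist xstar y ≤ 2 * f y := by
    have h := card_rpow_mul_dist_le_Lp_add univ x hν xstar y
    rw [card_univ, Fintype.card_fin, ← hf, ← hf] at h
    linarith [hxstar y]
  rw [Real.rpow_neg hN₀.le, ← div_eq_inv_mul, le_div_iff₀ (by positivity), mul_comm]
  exact key
end

section
/- (Theorem 2, second inequality.) If x* minimizes f_ν over M, then for every x ∈ M one has d(x*, x) ≤ N^{−1/ν} · 2 F̂_ν(x). -/
/-!
Minkowski's inequality applied to the triangle inequalities `d(x*, x) ≤ d(x*, xᵢ) + d(xᵢ, x)`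
gives `N^{1/ν} d(x*, x) ≤ f_ν(x*) + f_ν(x) ≤ 2 f_ν(x)` by minimality of `x*`, and `f_ν ≤ F̂_ν`
termwise.
-/

open Finset

theorem rpow_sum_rpow_le_rpow_sum_rpow {ι : Type*} (s : Finset ι) {p : ℝ} (hp : 0 ≤ p)
    {a b : ι → ℝ} (ha : ∀ i ∈ s, 0 ≤ a i) (hab : ∀ i ∈ s, a i ≤ b i) :
    (∑ i ∈ s, a i ^ p) ^ (1 / p) ≤ (∑ i ∈ s, b i ^ p) ^ (1 / p) :=
  Real.rpow_le_rpow (sum_nonneg fun i hi => Real.rpow_nonneg (ha i hi) _)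
    (sum_le_sum fun i hi => Real.rpow_le_rpow (ha i hi) (hab i hi) hp) (by positivity)

theorem rpow_sum_const_rpow {ι : Type*} (s : Finset ι) {p c : ℝ} (hp : p ≠ 0) (hc : 0 ≤ c) :
    (∑ _i ∈ s, c ^ p) ^ (1 / p) = (#s : ℝ) ^ (1 / p) * c := by
  rw [sum_const, nsmul_eq_mul, Real.mul_rpow (Nat.cast_nonneg _) (Real.rpow_nonneg hc _),
    ← Real.rpow_mul hc, mul_one_div_cancel hp, Real.rpow_one]

noncomputable def lpDistTo {M ι : Type*} [PseudoMetricSpace M] [Fintype ι] (x : ι → M) (p : ℝ)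
    (y : M) : ℝ :=
  (∑ i, dist y (x i) ^ p) ^ (1 / p)

theorem card_rpow_mul_dist_le_lpDistTo_add {M ι : Type*} [PseudoMetricSpace M] [Fintype ι]
    (x : ι → M) {p : ℝ} (hp : 1 ≤ p) (a b : M) :
    (Fintype.card ι : ℝ) ^ (1 / p) * dist a b ≤ lpDistTo x p a + lpDistTo x p b := by
  have hp0 : 0 < p := one_pos.trans_le hp
  calc (Fintype.card ι : ℝ) ^ (1 / p) * dist a b
      = (∑ _i, dist a b ^ p) ^ (1 / p) := (rpow_sum_const_rpow _ hp0.ne' dist_nonneg).symm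
    _ ≤ (∑ i, (dist a (x i) + dist (x i) b) ^ p) ^ (1 / p) :=
      rpow_sum_rpow_le_rpow_sum_rpow _ hp0.le (fun _ _ => dist_nonneg)
        fun _ _ => dist_triangle _ _ _
    _ ≤ (∑ i, dist a (x i) ^ p) ^ (1 / p) + (∑ i, dist (x i) b ^ p) ^ (1 / p) :=
      Real.Lp_add_le_of_nonneg _ hp (fun _ _ => dist_nonneg) fun _ _ => dist_nonneg
    _ = lpDistTo x p a + lpDistTo x p b := by simp only [lpDistTo, dist_comm (x _) b]

theorem dist_to_barycenter_upper_Fhat {M : Type*} [MetricSpace M] {N : ℕ} (hN : 1 ≤ N)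
    (x : Fin N → M) {ν : ℝ} (hν : 1 ≤ ν)
    (Mhat : M → M → ℝ)
    (hMhat : ∀ a b : M, dist a b ≤ Mhat a b)
    (f Fhat : M → ℝ)
    (hf : ∀ y : M, f y = (∑ i, dist y (x i) ^ ν) ^ (1 / ν))
    (hFhat : ∀ y : M, Fhat y = (∑ i, Mhat y (x i) ^ ν) ^ (1 / ν))
    (xstar : M) (hxstar : ∀ z : M, f xstar ≤ f z)
    (y : M) :
    dist xstar y ≤ (N : ℝ) ^ (-(1 / ν)) * (2 * Fhat y) := by
  have hf_le_Fhat : ∀ z, f z ≤ Fhat z := fun z => by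
    rw [hf, hFhat]
    exact rpow_sum_rpow_le_rpow_sum_rpow _ (by linarith) (fun _ _ => dist_nonneg)
      fun _ _ => hMhat _ _
  have hN_pos : (0 : ℝ) < N := by exact_mod_cast hN
  have key : (N : ℝ) ^ (1 / ν) * dist xstar y ≤ 2 * Fhat y := by
    have h := card_rpow_mul_dist_le_lpDistTo_add x hν xstar y
    rw [Fintype.card_fin, show lpDistTo x ν = f from funext fun z => (hf z).symm] at h
    linarith [hxstar y, hf_le_Fhat y]
  rw [Real.rpow_neg hN_pos.le, inv_mul_eq_div, le_div_iff₀' (by positivity)]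
  exact key
end

section
/- If x* minimizes f_ν over M and x̂* minimizes f̂_ν over M, then d(x*, x̂*) ≤ N^{−1/ν} · 2 F̂_ν(x̂*). -/
open Finset

theorem dist_barycenter_approx_upper {M : Type*} [MetricSpace M] {N : ℕ} (hN : 1 ≤ N)
    (x : Fin N → M) {ν : ℝ} (hν : 1 ≤ ν)
    (mhat Mhat : M → M → ℝ)
    (hbounds : ∀ a b : M, 0 ≤ mhat a b ∧ mhat a b ≤ dist a b ∧ dist a b ≤ Mhat a b)
    (f fhat Fhat : M → ℝ)
    (hf : ∀ y : M, f y = (∑ i, dist y (x i) ^ ν) ^ (1 / ν))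
    (hfhat : ∀ y : M, fhat y = (∑ i, mhat y (x i) ^ ν) ^ (1 / ν))
    (hFhat : ∀ y : M, Fhat y = (∑ i, Mhat y (x i) ^ ν) ^ (1 / ν))
    (xstar xhat : M)
    (hxstar : ∀ z : M, f xstar ≤ f z)
    (hxhat : ∀ z : M, fhat xhat ≤ fhat z) :
    dist xstar xhat ≤ (N : ℝ) ^ (-(1 / ν)) * (2 * Fhat xhat) := by
  have hν0 : (0 : ℝ) < ν := lt_of_lt_of_le one_pos hν
  have hν0' : (0 : ℝ) < 1 / ν := by positivity
  have hNpos : (0 : ℝ) < (N : ℝ) := by exact_mod_cast hN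
  -- f ≤ Fhat pointwise
  have hfF : ∀ y, f y ≤ Fhat y := by
    intro y
    rw [hf, hFhat]
    apply Real.rpow_le_rpow (by positivity) _ hν0'.le
    apply Finset.sum_le_sum
    intro i _
    exact Real.rpow_le_rpow dist_nonneg (hbounds y (x i)).2.2 hν0.le
  -- Minkowski-type bound
  have key : (N : ℝ) ^ (1 / ν) * dist xstar xhat ≤ f xstar + f xhat := by
    have h1 : (N : ℝ) ^ (1 / ν) * dist xstar xhat
        = (∑ _i : Fin N, dist xstar xhat ^ ν) ^ (1 / ν) := by
      rw [Finset.sum_const, Finset.card_univ, Fintype.card_fin, nsmul_eq_mul,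
        Real.mul_rpow (by positivity) (by positivity),
        ← Real.rpow_mul dist_nonneg, mul_one_div_cancel hν0.ne', Real.rpow_one]
    rw [h1]
    have h2 : (∑ _i : Fin N, dist xstar xhat ^ ν) ^ (1 / ν)
        ≤ (∑ i : Fin N, (dist xstar (x i) + dist xhat (x i)) ^ ν) ^ (1 / ν) := by
      apply Real.rpow_le_rpow (by positivity) _ hν0'.le
      apply Finset.sum_le_sum
      intro i _
      apply Real.rpow_le_rpow dist_nonneg _ hν0.le
      calc dist xstar xhat ≤ dist xstar (x i) + dist (x i) xhat := dist_triangle _ _ _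
        _ = dist xstar (x i) + dist xhat (x i) := by rw [dist_comm (x i)]
    refine h2.trans ?_
    rw [hf, hf]
    exact Real.Lp_add_le_of_nonneg (s := Finset.univ) hν
      (fun i _ => dist_nonneg) (fun i _ => dist_nonneg)
  -- combine
  have hfin : f xstar + f xhat ≤ 2 * Fhat xhat := by
    have := hxstar xhat
    have := hfF xhat
    linarith
  have hNne : (N : ℝ) ^ (1 / ν) ≠ 0 := by positivity
  rw [Real.rpow_neg hNpos.le]
  rw [inv_mul_eq_div, le_div_iff₀ (by positivity), mul_comm]
  exact key.trans hfin
end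

section
/- (Linear-bounds corollary.) Suppose l_m ‖x − y‖ ≤ d(x, y) ≤ l_M ‖x − y‖ holds for all x, y ∈ M, where 0 < l_m ≤ l_M. If x* minimizes f_ν over M, x̂* minimizes the function x ↦ (Σ_{i=1}^N ‖x − x_i‖^ν)^{1/ν} over M, and f_ν(x*) > 0, then (f_ν(x̂*) − f_ν(x*)) / f_ν(x*) ≤ l_M / l_m − 1. -/
/-! Both `f` and its Euclidean counterpart `g y = (∑ i, ‖y - x i‖ ^ ν) ^ (1 / ν)` are `ℓ^ν`-norms
of distance vectors, and this norm is monotone and positively homogeneous, so the linear bounds on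
`d` give `lm * g ≤ f ≤ lM * g` on `M`. Hence `f x̂ ≤ lM * g x̂ ≤ lM * g x* ≤ (lM / lm) * f x*`. -/

open Finset

section PowerSum

variable {ι : Type*} [Fintype ι] {ν c : ℝ} {a b : ι → ℝ}

lemma sum_rpow_one_div_le_sum_rpow_one_div (hν : 0 < ν) (ha : ∀ i, 0 ≤ a i)
    (hab : ∀ i, a i ≤ b i) :
    (∑ i, a i ^ ν) ^ (1 / ν) ≤ (∑ i, b i ^ ν) ^ (1 / ν) :=
  Real.rpow_le_rpow (sum_nonneg fun i _ => Real.rpow_nonneg (ha i) ν)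
    (sum_le_sum fun i _ => Real.rpow_le_rpow (ha i) (hab i) hν.le) (by positivity)

lemma sum_mul_rpow_one_div (hν : ν ≠ 0) (hc : 0 ≤ c) (ha : ∀ i, 0 ≤ a i) :
    (∑ i, (c * a i) ^ ν) ^ (1 / ν) = c * (∑ i, a i ^ ν) ^ (1 / ν) := by
  simp_rw [Real.mul_rpow hc (ha _), ← mul_sum]
  rw [Real.mul_rpow (Real.rpow_nonneg hc ν) (sum_nonneg fun i _ => Real.rpow_nonneg (ha i) ν),
    ← Real.rpow_mul hc, mul_one_div_cancel hν, Real.rpow_one]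

lemma sum_rpow_one_div_le_mul (hν : 0 < ν) (hc : 0 ≤ c) (ha : ∀ i, 0 ≤ a i)
    (hb : ∀ i, 0 ≤ b i) (hab : ∀ i, a i ≤ c * b i) :
    (∑ i, a i ^ ν) ^ (1 / ν) ≤ c * (∑ i, b i ^ ν) ^ (1 / ν) :=
  sum_mul_rpow_one_div hν.ne' hc hb ▸ sum_rpow_one_div_le_sum_rpow_one_div hν ha hab

lemma mul_sum_rpow_one_div_le (hν : 0 < ν) (hc : 0 ≤ c) (hb : ∀ i, 0 ≤ b i)
    (hab : ∀ i, c * b i ≤ a i) :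
    c * (∑ i, b i ^ ν) ^ (1 / ν) ≤ (∑ i, a i ^ ν) ^ (1 / ν) :=
  sum_mul_rpow_one_div hν.ne' hc hb ▸
    sum_rpow_one_div_le_sum_rpow_one_div hν (fun i => mul_nonneg hc (hb i)) hab

end PowerSum

theorem linear_bounds_corollary_general {E : Type*} [NormedAddCommGroup E] [NormedSpace ℝ E]
    (M : Set E) {N : ℕ}
    (x : Fin N → E) (hx : ∀ i, x i ∈ M) {ν : ℝ} (hν : 1 ≤ ν)
    (d : E → E → ℝ) (hd0 : ∀ a b : E, 0 ≤ d a b)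
    {lm lM : ℝ} (hlm : 0 < lm) (hlmM : lm ≤ lM)
    (hd : ∀ a ∈ M, ∀ b ∈ M, lm * ‖a - b‖ ≤ d a b ∧ d a b ≤ lM * ‖a - b‖)
    (f : E → ℝ)
    (hf : ∀ y : E, f y = (∑ i, d y (x i) ^ ν) ^ (1 / ν))
    (xstar : E) (hxstarM : xstar ∈ M)
    (xhat : E) (hxhatM : xhat ∈ M)
    (hxhat : ∀ z ∈ M, (∑ i, ‖xhat - x i‖ ^ ν) ^ (1 / ν) ≤ (∑ i, ‖z - x i‖ ^ ν) ^ (1 / ν))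
    (hfpos : 0 < f xstar) :
    (f xhat - f xstar) / f xstar ≤ lM / lm - 1 := by
  have hν0 : 0 < ν := one_pos.trans_le hν
  have hlM : 0 ≤ lM := hlm.le.trans hlmM
  set g : E → ℝ := fun y => (∑ i, ‖y - x i‖ ^ ν) ^ (1 / ν)
  have hupper : f xhat ≤ lM * g xhat := hf xhat ▸ sum_rpow_one_div_le_mul hν0 hlM
    (fun i => hd0 _ _) (fun i => norm_nonneg _) fun i => (hd xhat hxhatM (x i) (hx i)).2
  have hlower : lm * g xstar ≤ f xstar := hf xstar ▸ mul_sum_rpow_one_div_le hν0 hlm.le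
    (fun i => norm_nonneg _) fun i => (hd xstar hxstarM (x i) (hx i)).1
  have hfhat : f xhat ≤ lM / lm * f xstar := calc
    f xhat ≤ lM * g xhat := hupper
    _ ≤ lM * g xstar := mul_le_mul_of_nonneg_left (hxhat xstar hxstarM) hlM
    _ = lM / lm * (lm * g xstar) := by field_simp
    _ ≤ lM / lm * f xstar := mul_le_mul_of_nonneg_left hlower (by positivity)
  rw [div_le_iff₀ hfpos]
  linarith

theorem linear_bounds_corollary {E : Type*} [NormedAddCommGroup E] [NormedSpace ℝ E]
    (M : Set E) (hM : M.Nonempty) {N : ℕ} (hN : 1 ≤ N)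
    (x : Fin N → E) (hx : ∀ i, x i ∈ M) {ν : ℝ} (hν : 1 ≤ ν)
    (d : E → E → ℝ) (hd0 : ∀ a b : E, 0 ≤ d a b)
    {lm lM : ℝ} (hlm : 0 < lm) (hlmM : lm ≤ lM)
    (hd : ∀ a ∈ M, ∀ b ∈ M, lm * ‖a - b‖ ≤ d a b ∧ d a b ≤ lM * ‖a - b‖)
    (f : E → ℝ)
    (hf : ∀ y : E, f y = (∑ i, d y (x i) ^ ν) ^ (1 / ν))
    (xstar : E) (hxstarM : xstar ∈ M)
    (hxstar : ∀ z ∈ M, f xstar ≤ f z)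
    (xhat : E) (hxhatM : xhat ∈ M)
    (hxhat : ∀ z ∈ M, (∑ i, ‖xhat - x i‖ ^ ν) ^ (1 / ν) ≤ (∑ i, ‖z - x i‖ ^ ν) ^ (1 / ν))
    (hfpos : 0 < f xstar) :
    (f xhat - f xstar) / f xstar ≤ lM / lm - 1 :=
  linear_bounds_corollary_general M x hx hν d hd0 hlm hlmM hd f hf xstar hxstarM xhat hxhatM hxhat
    hfpos
end
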